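/- arXiv:0911.4935 — 9 statements merged into one kernel-verified Lean document; each statement's English description precedes it below -/
import Mathlib

section
/- For a positive random variable X with finite first moment and 0 < α ≤ 1/2, one has E[|⟨X⟩^α − X^α|^{1/α}] ≤ (1/α)·⟨X⟩^{1−α}·(⟨X⟩^α − ⟨X^α⟩), where ⟨X⟩ denotes E[X]. -/
/-!
Put γ = 1/α ≥ 2, a = X^α and c = ⟨X⟩^α, so that a^γ = X and c^γ = ⟨X⟩. The elementary
inequality |c - a|^γ ≤ γ c^(γ-1) (c - a) + (a^γ - c^γ) then holds pointwise, and taking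
expectations kills its last term X - ⟨X⟩. Both cases a ≤ c and c ≤ a of the elementary
inequality follow by differentiating in the gap |c - a|: the derivative has the right sign by
superadditivity of t ↦ t^(γ-1), which is where γ ≥ 2 enters.
-/

open MeasureTheory Real

lemma rpow_add_mul_rpow_sub_one_add_rpow_le_add_rpow {γ x y : ℝ} (hγ : 2 ≤ γ) (hx : 0 ≤ x)
    (hy : 0 ≤ y) : x ^ γ + γ * x ^ (γ - 1) * y + y ^ γ ≤ (x + y) ^ γ := by
  let F : ℝ → ℝ := fun t => (x + t) ^ γ - x ^ γ - γ * x ^ (γ - 1) * t - t ^ γ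
  have hF (t : ℝ) :
      HasDerivAt F (γ * (x + t) ^ (γ - 1) - γ * x ^ (γ - 1) - γ * t ^ (γ - 1)) t := by
    have hγ1 : 1 ≤ γ := by linarith
    refine ((((((hasDerivAt_id' t).const_add x).rpow_const (Or.inr hγ1)).sub_const (x ^ γ)).sub
      ((hasDerivAt_id' t).const_mul (γ * x ^ (γ - 1)))).sub
      ((hasDerivAt_id' t).rpow_const (Or.inr hγ1))).congr_deriv (by ring)
  have hmono : MonotoneOn F (Set.Ici 0) := by
    refine monotoneOn_of_hasDerivWithinAt_nonneg (convex_Ici 0)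
      (fun t _ => (hF t).continuousAt.continuousWithinAt) (fun t _ => (hF t).hasDerivWithinAt) ?_
    intro t ht
    rw [interior_Ici, Set.mem_Ioi] at ht
    have := add_rpow_le_rpow_add hx ht.le (by linarith : 1 ≤ γ - 1)
    nlinarith
  have := hmono Set.self_mem_Ici hy hy
  simp only [F, add_zero, sub_self, mul_zero, zero_rpow (by linarith : γ ≠ 0), sub_nonneg] at this
  linarith

lemma rpow_sub_rpow_sub_add_rpow_le_mul_rpow_sub_one {γ c u : ℝ} (hγ : 2 ≤ γ) (hu : 0 ≤ u)
    (huc : u ≤ c) : c ^ γ - (c - u) ^ γ + u ^ γ ≤ γ * c ^ (γ - 1) * u := by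
  let G : ℝ → ℝ := fun t => γ * c ^ (γ - 1) * t - c ^ γ + (c - t) ^ γ - t ^ γ
  have hG (t : ℝ) :
      HasDerivAt G (γ * c ^ (γ - 1) - γ * (c - t) ^ (γ - 1) - γ * t ^ (γ - 1)) t := by
    have hγ1 : 1 ≤ γ := by linarith
    refine (((((hasDerivAt_id' t).const_mul (γ * c ^ (γ - 1))).sub_const (c ^ γ)).add
      (((hasDerivAt_id' t).const_sub c).rpow_const (Or.inr hγ1))).sub
      ((hasDerivAt_id' t).rpow_const (Or.inr hγ1))).congr_deriv (by ring)
  have hmono : MonotoneOn G (Set.Icc 0 c) := by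
    refine monotoneOn_of_hasDerivWithinAt_nonneg (convex_Icc 0 c)
      (fun t _ => (hG t).continuousAt.continuousWithinAt) (fun t _ => (hG t).hasDerivWithinAt) ?_
    intro t ht
    rw [interior_Icc, Set.mem_Ioo] at ht
    have := add_rpow_le_rpow_add (sub_nonneg.2 ht.2.le) ht.1.le (by linarith : 1 ≤ γ - 1)
    rw [sub_add_cancel] at this
    nlinarith
  have := hmono (Set.left_mem_Icc.2 (hu.trans huc)) ⟨hu, huc⟩ hu
  simp only [G, mul_zero, zero_sub, sub_zero, neg_add_cancel, zero_rpow (by linarith : γ ≠ 0),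
    sub_self, sub_nonneg] at this
  linarith

lemma abs_sub_rpow_le_of_two_le {γ a c : ℝ} (hγ : 2 ≤ γ) (ha : 0 ≤ a) (hc : 0 ≤ c) :
    |c - a| ^ γ ≤ γ * c ^ (γ - 1) * (c - a) + (a ^ γ - c ^ γ) := by
  rcases le_total a c with hac | hca
  · have := rpow_sub_rpow_sub_add_rpow_le_mul_rpow_sub_one hγ (sub_nonneg.2 hac) (sub_le_self c ha)
    rw [sub_sub_cancel] at this
    rw [abs_of_nonneg (sub_nonneg.2 hac)]
    linarith
  · have := rpow_add_mul_rpow_sub_one_add_rpow_le_add_rpow hγ hc (sub_nonneg.2 hca)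
    rw [add_sub_cancel] at this
    rw [abs_sub_comm, abs_of_nonneg (sub_nonneg.2 hca)]
    linarith

lemma abs_rpow_sub_rpow_rpow_inv_le {α x m : ℝ} (hα : 0 < α) (hα2 : α ≤ 1 / 2) (hx : 0 ≤ x)
    (hm : 0 ≤ m) :
    |m ^ α - x ^ α| ^ (1 / α) ≤ 1 / α * m ^ (1 - α) * (m ^ α - x ^ α) + (x - m) := by
  have hγ : 2 ≤ 1 / α := by rw [le_div_iff₀ hα]; linarith
  have key := abs_sub_rpow_le_of_two_le hγ (rpow_nonneg hx α) (rpow_nonneg hm α)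
  have hinv {y : ℝ} (hy : 0 ≤ y) : (y ^ α) ^ (1 / α) = y := by
    rw [one_div, rpow_rpow_inv hy hα.ne']
  have hexp : α * (1 / α - 1) = 1 - α := by field_simp
  rwa [hinv hx, hinv hm, ← rpow_mul hm, hexp] at key

theorem stmt_0_general {Ω : Type*} [MeasurableSpace Ω] (μ : Measure Ω) [IsProbabilityMeasure μ]
    (X : Ω → ℝ) (hXpos : ∀ᵐ ω ∂μ, 0 < X ω)
    (hX : Integrable X μ)
    (α : ℝ) (hα : 0 < α) (hα2 : α ≤ 1/2)
    (hIntα : Integrable (fun ω => X ω ^ α) μ)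
    (hInt : Integrable (fun ω => |(∫ x, X x ∂μ) ^ α - X ω ^ α| ^ (1/α)) μ) :
    ∫ ω, |(∫ x, X x ∂μ) ^ α - X ω ^ α| ^ (1/α) ∂μ ≤
      (1/α) * (∫ x, X x ∂μ) ^ (1 - α) * ((∫ x, X x ∂μ) ^ α - ∫ ω, X ω ^ α ∂μ) := by
  set m := ∫ x, X x ∂μ with hm_def
  have hm : 0 ≤ m := integral_nonneg_of_ae (hXpos.mono fun _ h => h.le)
  have hlin : Integrable (fun ω => 1 / α * m ^ (1 - α) * (m ^ α - X ω ^ α)) μ :=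
    ((integrable_const _).sub hIntα).const_mul _
  have hcentered : Integrable (fun ω => X ω - m) μ := hX.sub (integrable_const m)
  calc ∫ ω, |m ^ α - X ω ^ α| ^ (1 / α) ∂μ
      ≤ ∫ ω, (1 / α * m ^ (1 - α) * (m ^ α - X ω ^ α) + (X ω - m)) ∂μ :=
        integral_mono_ae hInt (hlin.add hcentered)
          (hXpos.mono fun ω hω => abs_rpow_sub_rpow_rpow_inv_le hα hα2 hω.le hm)
    _ = 1 / α * m ^ (1 - α) * (m ^ α - ∫ ω, X ω ^ α ∂μ) := by
        rw [integral_add hlin hcentered, integral_const_mul,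
          integral_sub (integrable_const _) hIntα, integral_sub hX (integrable_const m)]
        simp [← hm_def]

/-- Quantitative Jensen inequality: for a positive integrable random variable `X`
and `0 < α ≤ 1/2`,
`E[|⟨X⟩^α − X^α|^{1/α}] ≤ (1/α)·⟨X⟩^{1−α}·(⟨X⟩^α − ⟨X^α⟩)`. -/
theorem stmt_0 {Ω : Type*} [MeasurableSpace Ω] (μ : Measure Ω) [IsProbabilityMeasure μ]
    (X : Ω → ℝ) (hXm : Measurable X) (hXpos : ∀ᵐ ω ∂μ, 0 < X ω)
    (hX : Integrable X μ)
    (α : ℝ) (hα : 0 < α) (hα2 : α ≤ 1/2)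
    (hIntα : Integrable (fun ω => X ω ^ α) μ)
    (hInt : Integrable (fun ω => |(∫ x, X x ∂μ) ^ α - X ω ^ α| ^ (1/α)) μ) :
    ∫ ω, |(∫ x, X x ∂μ) ^ α - X ω ^ α| ^ (1/α) ∂μ ≤
      (1/α) * (∫ x, X x ∂μ) ^ (1 - α) * ((∫ x, X x ∂μ) ^ α - ∫ ω, X ω ^ α ∂μ) :=
  stmt_0_general μ X hXpos hX α hα hα2 hIntα hInt
end

section
/- For 0 < α ≤ 1/2, the function g(z) = |z^α − 1|^{1/α} + z^α/α − z, defined for z > 0, attains its maximum value 1/α − 1 at z = 1. -/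
/-!
Substituting `t = z ^ α` and `p = 1 / α ≥ 2` turns `g z` into `|t - 1| ^ p + p t - t ^ p`,
which equals `p - 1` at `t = 1`. On either side of `t = 1` the bound by `p - 1` is the
comparison of a monotone function with its value at an endpoint: for `t ≥ 1` the derivative
is nonnegative by superadditivity of `x ↦ x ^ (p - 1)`, for `t ≤ 1` it is nonpositive because
`x ^ (p - 1) ≤ x` on `[0, 1]`.
-/

open Real Set

theorem rpow_add_mul_add_one_le_add_one_rpow {p a : ℝ} (hp : 2 ≤ p) (ha : 0 ≤ a) :
    a ^ p + p * a + 1 ≤ (a + 1) ^ p := by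
  let f : ℝ → ℝ := fun x => (x + 1) ^ p - x ^ p - p * x
  have hp0 : 0 < p := by linarith
  have hcont : ContinuousOn f (Ici 0) := by
    unfold f
    fun_prop (disch := linarith)
  have hderiv : ∀ x ∈ interior (Ici (0 : ℝ)),
      HasDerivWithinAt f (p * (x + 1) ^ (p - 1) - p * x ^ (p - 1) - p) (interior (Ici 0)) x := by
    intro x _
    have h₁ := ((hasDerivAt_id x).add_const 1).rpow_const (p := p) (Or.inr (by linarith))
    have h₂ := (hasDerivAt_id x).rpow_const (p := p) (Or.inr (by linarith))
    exact ((h₁.sub h₂).sub ((hasDerivAt_id x).const_mul p)).hasDerivWithinAt.congr_deriv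
      (by simp)
  have hmono : MonotoneOn f (Ici 0) := by
    refine monotoneOn_of_hasDerivWithinAt_nonneg (convex_Ici 0) hcont hderiv fun x hx => ?_
    rw [interior_Ici] at hx
    have hsuper : x ^ (p - 1) + 1 ^ (p - 1) ≤ (x + 1) ^ (p - 1) :=
      add_rpow_le_rpow_add hx.le zero_le_one (by linarith)
    rw [one_rpow] at hsuper
    nlinarith
  have h := hmono self_mem_Ici ha ha
  simp only [f, zero_add, one_rpow, zero_rpow hp0.ne', mul_zero] at h
  linarith

theorem one_sub_rpow_add_mul_le_rpow_add_sub_one {p t : ℝ} (hp : 2 ≤ p) (ht₀ : 0 ≤ t)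
    (ht₁ : t ≤ 1) : (1 - t) ^ p + p * t ≤ t ^ p + p - 1 := by
  let f : ℝ → ℝ := fun x => x ^ p - p * x - (1 - x) ^ p
  have hp0 : 0 < p := by linarith
  have hcont : ContinuousOn f (Icc 0 1) := by
    unfold f
    fun_prop (disch := linarith)
  have hderiv : ∀ x ∈ interior (Icc (0 : ℝ) 1), HasDerivWithinAt f
      (p * x ^ (p - 1) - p + p * (1 - x) ^ (p - 1)) (interior (Icc 0 1)) x := by
    intro x _
    have h₁ := (hasDerivAt_id x).rpow_const (p := p) (Or.inr (by linarith))
    have h₂ := ((hasDerivAt_id x).const_sub 1).rpow_const (p := p) (Or.inr (by linarith))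
    exact ((h₁.sub ((hasDerivAt_id x).const_mul p)).sub h₂).hasDerivWithinAt.congr_deriv
      (by simp)
  have hanti : AntitoneOn f (Icc 0 1) := by
    refine antitoneOn_of_hasDerivWithinAt_nonpos (convex_Icc 0 1) hcont hderiv fun x hx => ?_
    rw [interior_Icc] at hx
    have hx' : x ^ (p - 1) ≤ x := rpow_le_self_of_le_one hx.1.le hx.2.le (by linarith)
    have hx'' : (1 - x) ^ (p - 1) ≤ 1 - x :=
      rpow_le_self_of_le_one (by linarith [hx.2]) (by linarith [hx.1]) (by linarith)
    nlinarith
  have h := hanti ⟨ht₀, ht₁⟩ (right_mem_Icc.2 zero_le_one) ht₁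
  simp only [f, one_rpow, sub_self, zero_rpow hp0.ne', mul_one, sub_zero] at h
  linarith

theorem abs_sub_one_rpow_add_mul_sub_rpow_le {p t : ℝ} (hp : 2 ≤ p) (ht : 0 ≤ t) :
    |t - 1| ^ p + p * t - t ^ p ≤ p - 1 := by
  rcases le_total 1 t with h | h
  · have key := rpow_add_mul_add_one_le_add_one_rpow hp (sub_nonneg.2 h)
    rw [sub_add_cancel] at key
    rw [abs_of_nonneg (sub_nonneg.2 h)]
    linarith
  · have key := one_sub_rpow_add_mul_le_rpow_add_sub_one hp ht h
    rw [abs_sub_comm, abs_of_nonneg (sub_nonneg.2 h)]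
    linarith

/-- For `0 < α ≤ 1/2`, the function `g(z) = |z^α − 1|^{1/α} + z^α/α − z` on `(0,∞)`
attains its maximum value `1/α − 1` at `z = 1`. -/
theorem stmt_1 (α : ℝ) (hα : 0 < α) (hα2 : α ≤ 1/2)
    (g : ℝ → ℝ) (hg : g = fun z => |z ^ α - 1| ^ (1/α) + z ^ α / α - z) :
    g 1 = 1/α - 1 ∧ ∀ z > 0, g z ≤ 1/α - 1 := by
  subst hg
  refine ⟨by simp [zero_rpow (inv_pos.2 hα).ne'], fun z hz => ?_⟩
  have hp : 2 ≤ 1 / α := by rw [le_div_iff₀ hα]; linarith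
  have hz' : (z ^ α) ^ (1 / α) = z := by
    rw [← rpow_mul hz.le, mul_one_div_cancel hα.ne', rpow_one]
  have key := abs_sub_one_rpow_add_mul_sub_rpow_le hp (rpow_nonneg hz.le α)
  rw [hz'] at key
  calc |z ^ α - 1| ^ (1 / α) + z ^ α / α - z
      = |z ^ α - 1| ^ (1 / α) + 1 / α * z ^ α - z := by ring
    _ ≤ 1 / α - 1 := key
end

section
/- Let X be a positive random variable with finite mean ⟨X⟩ such that E[X | X > x] ≥ ⟨X⟩ + β₀x for all 0 < x < ‖X‖_∞, with β₀ > 0. Then for every ξ > 0, E[X; X < (1+ξ)⟨X⟩] ≤ 2(1+ξ)/(√(1+(1+ξ)β₀)+1) · ⟨X⟩. -/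
open MeasureTheory

/-!
Put `s = √(1 + (1 + ξ)β₀)` and take the threshold `x = (s - 1)⟨X⟩/β₀`, chosen so that
`⟨X⟩ + β₀x = s⟨X⟩`. As `E[X; X > x] ≤ ⟨X⟩`, the hypothesis at `x` gives `s P(X > x) ≤ 1`
(trivially so when `x ≥ ‖X‖_∞`, as then `P(X > x) = 0`). With `t = (1 + ξ)⟨X⟩ = (s + 1)x`,
the pointwise bound `X 1_{X < t} ≤ x + (t - x) 1_{X > x}` gives
`E[X; X < t] ≤ x + s x P(X > x) ≤ 2x`, and `2x` is the claimed bound.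
-/

namespace ConditionalMeanBound

variable {Ω : Type*} [MeasurableSpace Ω] {μ : Measure Ω} {X : Ω → ℝ}

lemma integral_pos_of_ae_pos [NeZero μ] (hXpos : ∀ᵐ ω ∂μ, 0 < X ω) (hX : Integrable X μ) :
    0 < ∫ ω, X ω ∂μ := by
  rw [integral_pos_iff_support_of_nonneg_ae (hXpos.mono fun _ h ↦ h.le) hX, pos_iff_ne_zero]
  intro h
  obtain ⟨ω, hω, hpos⟩ := ((measure_eq_zero_iff_ae_notMem.mp h).and hXpos).exists
  exact hω hpos.ne'

lemma measure_lt_eq_zero_of_eLpNorm_top_le {c : ℝ} (hc : 0 ≤ c)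
    (h : eLpNorm X ⊤ μ ≤ ENNReal.ofReal c) : μ {ω | c < X ω} = 0 := by
  have hle : ∀ᵐ ω ∂μ, X ω ≤ c := by
    filter_upwards [enorm_ae_le_eLpNormEssSup X μ] with ω hω
    rw [← eLpNorm_exponent_top, ← ofReal_norm] at hω
    exact (le_abs_self _).trans ((ENNReal.ofReal_le_ofReal_iff hc).mp (hω.trans h))
  simpa only [not_le] using ae_iff.mp hle

lemma setIntegral_lt_le_add_mul_measure [IsProbabilityMeasure μ] (hXm : Measurable X)
    (hX : Integrable X μ) {x t : ℝ} (hx : 0 ≤ x) (ht : 0 ≤ t) :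
    ∫ ω in {ω | X ω < t}, X ω ∂μ ≤ x + (t - x) * (μ {ω | x < X ω}).toReal := by
  have hA : MeasurableSet {ω | x < X ω} := measurableSet_lt measurable_const hXm
  rw [← integral_indicator (measurableSet_lt hXm measurable_const)]
  calc ∫ ω, {ω | X ω < t}.indicator X ω ∂μ
      ≤ ∫ ω, (x + {ω | x < X ω}.indicator (fun _ ↦ t - x) ω) ∂μ := by
        refine integral_mono (hX.indicator (measurableSet_lt hXm measurable_const))
          ((integrable_const x).add ((integrable_const (t - x)).indicator hA)) fun ω ↦ ?_
        by_cases h1 : X ω < t <;> by_cases h2 : x < X ω <;>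
          simp only [Set.indicator, Set.mem_ofPred_eq, h1, h2, ↓reduceIte, add_sub_cancel,
            add_zero] <;> linarith
    _ = x + (t - x) * (μ {ω | x < X ω}).toReal := by
        rw [integral_add (integrable_const x) ((integrable_const (t - x)).indicator hA),
          integral_const, integral_indicator_const _ hA]
        simp [measureReal_def, mul_comm]

lemma mul_measure_lt_le_integral (hXnn : 0 ≤ᵐ[μ] X) (hX : Integrable X μ) {x a : ℝ}
    (hx : 0 ≤ x)
    (h : ENNReal.ofReal x < eLpNorm X ⊤ μ →
      a * (μ {ω | x < X ω}).toReal ≤ ∫ ω in {ω | x < X ω}, X ω ∂μ) :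
    a * (μ {ω | x < X ω}).toReal ≤ ∫ ω, X ω ∂μ := by
  rcases lt_or_ge (ENNReal.ofReal x) (eLpNorm X ⊤ μ) with hlt | hge
  · exact (h hlt).trans (setIntegral_le_integral hX hXnn)
  · rw [measure_lt_eq_zero_of_eLpNorm_top_le hx hge, ENNReal.toReal_zero, mul_zero]
    exact integral_nonneg_of_ae hXnn

end ConditionalMeanBound

open ConditionalMeanBound

/-- If a positive integrable random variable `X` satisfies
`E[X | X > x] ≥ ⟨X⟩ + β₀x` for `0 < x < ‖X‖_∞` with `β₀ > 0`, then for every `ξ > 0`,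
`E[X; X < (1+ξ)⟨X⟩] ≤ 2(1+ξ)/(√(1+(1+ξ)β₀)+1)·⟨X⟩`. -/
theorem stmt_3 {Ω : Type*} [MeasurableSpace Ω] (μ : Measure Ω) [IsProbabilityMeasure μ]
    (X : Ω → ℝ) (hXm : Measurable X) (hXpos : ∀ᵐ ω ∂μ, 0 < X ω)
    (hX : Integrable X μ)
    (β₀ : ℝ) (hβ₀ : 0 < β₀)
    (hcond : ∀ x : ℝ, 0 < x → ENNReal.ofReal x < eLpNorm X ⊤ μ →
      ((∫ ω, X ω ∂μ) + β₀ * x) * (μ {ω | x < X ω}).toReal ≤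
        ∫ ω in {ω | x < X ω}, X ω ∂μ)
    (ξ : ℝ) (hξ : 0 < ξ) :
    ∫ ω in {ω | X ω < (1 + ξ) * ∫ x, X x ∂μ}, X ω ∂μ ≤
      2 * (1 + ξ) / (Real.sqrt (1 + (1 + ξ) * β₀) + 1) * ∫ x, X x ∂μ := by
  set m := ∫ ω, X ω ∂μ
  set s := √(1 + (1 + ξ) * β₀)
  have hm : 0 < m := integral_pos_of_ae_pos hXpos hX
  have hs : 1 < s := Real.lt_sqrt zero_le_one |>.mpr (by nlinarith)
  have hξs : 1 + ξ = (s ^ 2 - 1) / β₀ := by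
    rw [Real.sq_sqrt (by nlinarith)]; field_simp; ring
  obtain ⟨x, hx_def⟩ : ∃ x, x = (s - 1) / β₀ * m := ⟨_, rfl⟩
  have hx : 0 < x := hx_def ▸ mul_pos (div_pos (sub_pos.mpr hs) hβ₀) hm
  have hmx : m + β₀ * x = m * s := by rw [hx_def]; field_simp; ring
  have htx : (1 + ξ) * m = x * (s + 1) := by rw [hx_def, hξs]; field_simp; ring
  set p := (μ {ω | x < X ω}).toReal
  have htail : m * s * p ≤ m := by
    refine mul_measure_lt_le_integral (hXpos.mono fun _ h ↦ h.le) hX hx.le fun h ↦ ?_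
    simpa only [hmx] using hcond x hx h
  calc ∫ ω in {ω | X ω < (1 + ξ) * m}, X ω ∂μ
      ≤ x + ((1 + ξ) * m - x) * p :=
        setIntegral_lt_le_add_mul_measure hXm hX hx.le (by positivity)
    _ = x + (s - 1) / β₀ * (m * s * p) := by rw [htx, hx_def]; ring
    _ ≤ x + (s - 1) / β₀ * m := by gcongr
    _ = 2 * (1 + ξ) / (s + 1) * m := by
        rw [← hx_def, div_mul_eq_mul_div, mul_assoc, htx]; field_simp; ring
end

section
/- For ξ > 0 and β₀ > 0, the minimum over 0 < λ < 1+ξ of (1 + ξ + β₀λ²)/(1 + β₀λ) equals 2(1+ξ)/(√(1+(1+ξ)β₀)+1), attained at λ = (√(1+(1+ξ)β₀)−1)/β₀. -/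
/-!
Write `s = √(1 + cβ)` with `c = 1 + ξ`, so that `cβ = s² - 1` and the claimed minimum
`2c/(s + 1)` equals `2(s - 1)/β`. Completing the square gives
`(c + βλ²)/(1 + βλ) - 2c/(s + 1) = (βλ - (s - 1))² / (β(1 + βλ))`,
which is nonnegative whenever `1 + βλ > 0` and vanishes exactly at `λ = (s - 1)/β`;
this point lies in `(0, c)` because `1 < s < s²`.
-/

open Real Set

section
variable {c β : ℝ}

theorem sqrt_one_add_mul_sub_one_div_mem_Ioo (hc : 0 < c) (hβ : 0 < β) :
    (√(1 + c * β) - 1) / β ∈ Ioo 0 c := by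
  have hs2 : √(1 + c * β) ^ 2 = 1 + c * β := sq_sqrt (by positivity)
  have hs1 : 1 < √(1 + c * β) := by
    rw [lt_sqrt zero_le_one]
    nlinarith
  refine ⟨div_pos (by linarith) hβ, ?_⟩
  rw [div_lt_iff₀ hβ]
  nlinarith

theorem div_sub_two_mul_div_sqrt_add_one (hβ : β ≠ 0) (hcβ : 0 ≤ 1 + c * β) {l : ℝ}
    (hl : 1 + β * l ≠ 0) :
    (c + β * l ^ 2) / (1 + β * l) - 2 * c / (√(1 + c * β) + 1) =
      (β * l - (√(1 + c * β) - 1)) ^ 2 / (β * (1 + β * l)) := by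
  have hs2 : √(1 + c * β) ^ 2 = 1 + c * β := sq_sqrt hcβ
  have hs : √(1 + c * β) + 1 ≠ 0 := by positivity
  field_simp
  linear_combination (1 - √(1 + c * β) + 2 * β * l) * hs2

theorem two_mul_div_sqrt_add_one_le_div (hβ : 0 < β) (hcβ : 0 ≤ 1 + c * β) {l : ℝ}
    (hl : 0 < 1 + β * l) :
    2 * c / (√(1 + c * β) + 1) ≤ (c + β * l ^ 2) / (1 + β * l) := by
  have hgap := div_sub_two_mul_div_sqrt_add_one hβ.ne' hcβ hl.ne'
  have : 0 ≤ (β * l - (√(1 + c * β) - 1)) ^ 2 / (β * (1 + β * l)) := by positivity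
  linarith

theorem div_at_sqrt_one_add_mul_sub_one_div (hβ : 0 < β) (hcβ : 0 < 1 + c * β) :
    (c + β * ((√(1 + c * β) - 1) / β) ^ 2) / (1 + β * ((√(1 + c * β) - 1) / β)) =
      2 * c / (√(1 + c * β) + 1) := by
  have hβl : 1 + β * ((√(1 + c * β) - 1) / β) = √(1 + c * β) := by
    field_simp
    ring
  refine sub_eq_zero.mp ((div_sub_two_mul_div_sqrt_add_one hβ.ne' hcβ.le
    (by rw [hβl]; positivity)).trans ?_)
  rw [mul_div_cancel₀ _ hβ.ne', sub_self, zero_pow two_ne_zero, zero_div]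

end

/-- For `ξ > 0` and `β₀ > 0`, the minimum over `0 < λ < 1+ξ` of
`(1 + ξ + β₀λ²)/(1 + β₀λ)` equals `2(1+ξ)/(√(1+(1+ξ)β₀)+1)`, attained at
`λ = (√(1+(1+ξ)β₀)−1)/β₀`. -/
theorem stmt_4 (ξ β₀ : ℝ) (hξ : 0 < ξ) (hβ : 0 < β₀) :
    (Real.sqrt (1 + (1 + ξ) * β₀) - 1) / β₀ ∈ Set.Ioo 0 (1 + ξ) ∧
    (1 + ξ + β₀ * ((Real.sqrt (1 + (1 + ξ) * β₀) - 1) / β₀) ^ 2) /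
        (1 + β₀ * ((Real.sqrt (1 + (1 + ξ) * β₀) - 1) / β₀)) =
      2 * (1 + ξ) / (Real.sqrt (1 + (1 + ξ) * β₀) + 1) ∧
    ∀ l ∈ Set.Ioo (0:ℝ) (1 + ξ),
      2 * (1 + ξ) / (Real.sqrt (1 + (1 + ξ) * β₀) + 1) ≤
        (1 + ξ + β₀ * l ^ 2) / (1 + β₀ * l) := by
  have hc : 0 < 1 + ξ := by linarith
  have hcβ : 0 < 1 + (1 + ξ) * β₀ := by positivity
  refine ⟨sqrt_one_add_mul_sub_one_div_mem_Ioo hc hβ,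
    div_at_sqrt_one_add_mul_sub_one_div hβ hcβ, fun l hl => ?_⟩
  exact two_mul_div_sqrt_add_one_le_div hβ hcβ.le (by nlinarith [hl.1])
end

section
/- Define h(x) = e^{−x}(1 + ε cos x) for x ≥ 0 and |ε| < 1/2. Then the associated β function is β(x) = (1 + ε cos x)(1 + 2ε sin x)/(1 + ε cos x + ε sin x)², and it satisfies 0 < inf β ≤ sup β < ∞. -/
/-! Writing `h = e^{-x} g` with `g = 1 + ε cos x`, one gets `h' = -e^{-x} (g - g')` and
`h'' = e^{-x} (g - 2g' + g'')`; the exponentials cancel in `h'' h / h'^2`. Since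
`|ε cos x|, |ε sin x| ≤ |ε| < 1/2`, every factor of the resulting quotient lies in the fixed
interval `[1 - 2|ε|, 1 + 2|ε|] ⊂ (0, ∞)`, which bounds it uniformly. -/

open Real

section Derivatives

variable (ε : ℝ)

lemma hasDerivAt_exp_neg_mul_one_add_mul_cos (x : ℝ) :
    HasDerivAt (fun x => exp (-x) * (1 + ε * cos x))
      (-(exp (-x) * (1 + ε * cos x + ε * sin x))) x := by
  refine ((hasDerivAt_neg x).exp.fun_mul
    (((hasDerivAt_cos x).const_mul ε).const_add 1)).congr_deriv ?_
  ring

lemma hasDerivAt_neg_exp_neg_mul_one_add_mul_cos_add_mul_sin (x : ℝ) :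
    HasDerivAt (fun x => -(exp (-x) * (1 + ε * cos x + ε * sin x)))
      (exp (-x) * (1 + 2 * ε * sin x)) x := by
  refine ((hasDerivAt_neg x).exp.fun_mul ((((hasDerivAt_cos x).const_mul ε).const_add 1).fun_add
    ((hasDerivAt_sin x).const_mul ε))).fun_neg.congr_deriv ?_
  ring

lemma deriv_exp_neg_mul_one_add_mul_cos :
    deriv (fun x => exp (-x) * (1 + ε * cos x)) =
      fun x => -(exp (-x) * (1 + ε * cos x + ε * sin x)) :=
  funext fun x => (hasDerivAt_exp_neg_mul_one_add_mul_cos ε x).deriv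

lemma deriv_deriv_exp_neg_mul_one_add_mul_cos :
    deriv (deriv fun x => exp (-x) * (1 + ε * cos x)) =
      fun x => exp (-x) * (1 + 2 * ε * sin x) := by
  rw [deriv_exp_neg_mul_one_add_mul_cos]
  exact funext fun x => (hasDerivAt_neg_exp_neg_mul_one_add_mul_cos_add_mul_sin ε x).deriv

end Derivatives

lemma abs_mul_le_abs_left_of_abs_le_one {a t : ℝ} (ht : |t| ≤ 1) : |a * t| ≤ |a| := by
  rw [abs_mul]
  exact mul_le_of_le_one_right (abs_nonneg a) ht

section Bounds

variable {e c s : ℝ}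

lemma one_add_add_pos (he : e < 1 / 2) (hc : |c| ≤ e) (hs : |s| ≤ e) : 0 < 1 + c + s := by
  linarith [neg_abs_le c, neg_abs_le s]

lemma div_sq_one_add_add_le (he : e < 1 / 2) (hc : |c| ≤ e) (hs : |s| ≤ e) :
    (1 + c) * (1 + 2 * s) / (1 + c + s) ^ 2 ≤ (1 + e) * (1 + 2 * e) / (1 - 2 * e) ^ 2 := by
  obtain ⟨hc₁, hc₂⟩ := abs_le.mp hc
  obtain ⟨hs₁, hs₂⟩ := abs_le.mp hs
  have hnum : (1 + c) * (1 + 2 * s) ≤ (1 + e) * (1 + 2 * e) :=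
    mul_le_mul (by linarith) (by linarith) (by linarith) (by linarith)
  have hden : (1 - 2 * e) ^ 2 ≤ (1 + c + s) ^ 2 :=
    pow_le_pow_left₀ (by linarith) (by linarith) 2
  exact div_le_div₀ (by nlinarith) hnum (by nlinarith) hden

lemma le_div_sq_one_add_add (he : e < 1 / 2) (hc : |c| ≤ e) (hs : |s| ≤ e) :
    (1 - e) * (1 - 2 * e) / (1 + 2 * e) ^ 2 ≤ (1 + c) * (1 + 2 * s) / (1 + c + s) ^ 2 := by
  obtain ⟨hc₁, hc₂⟩ := abs_le.mp hc
  obtain ⟨hs₁, hs₂⟩ := abs_le.mp hs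
  have hnum : (1 - e) * (1 - 2 * e) ≤ (1 + c) * (1 + 2 * s) :=
    mul_le_mul (by linarith) (by linarith) (by linarith) (by linarith)
  have hden : (1 + c + s) ^ 2 ≤ (1 + 2 * e) ^ 2 :=
    pow_le_pow_left₀ (one_add_add_pos he hc hs).le (by linarith) 2
  exact div_le_div₀ (by nlinarith) hnum (by nlinarith [one_add_add_pos he hc hs]) hden

end Bounds

/-- For `h(x) = e^{−x}(1 + ε cos x)` with `|ε| < 1/2`, the associated β function equals
`(1 + ε cos x)(1 + 2ε sin x)/(1 + ε cos x + ε sin x)²`, and it is bounded above and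
below away from zero. -/
theorem stmt_9 (ε : ℝ) (hε : |ε| < 1/2)
    (h : ℝ → ℝ) (hh : h = fun x => Real.exp (-x) * (1 + ε * Real.cos x)) :
    (∀ x ≥ (0:ℝ), deriv (deriv h) x * h x / (deriv h x) ^ 2 =
      (1 + ε * Real.cos x) * (1 + 2 * ε * Real.sin x) /
        (1 + ε * Real.cos x + ε * Real.sin x) ^ 2) ∧
    ∃ c C : ℝ, 0 < c ∧ ∀ x ≥ (0:ℝ),
      c ≤ (1 + ε * Real.cos x) * (1 + 2 * ε * Real.sin x) /
            (1 + ε * Real.cos x + ε * Real.sin x) ^ 2 ∧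
      (1 + ε * Real.cos x) * (1 + 2 * ε * Real.sin x) /
            (1 + ε * Real.cos x + ε * Real.sin x) ^ 2 ≤ C := by
  have hcos x : |ε * cos x| ≤ |ε| := abs_mul_le_abs_left_of_abs_le_one (abs_cos_le_one x)
  have hsin x : |ε * sin x| ≤ |ε| := abs_mul_le_abs_left_of_abs_le_one (abs_sin_le_one x)
  refine ⟨fun x _ => ?_, (1 - |ε|) * (1 - 2 * |ε|) / (1 + 2 * |ε|) ^ 2,
    (1 + |ε|) * (1 + 2 * |ε|) / (1 - 2 * |ε|) ^ 2, ?_, fun x _ => ?_⟩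
  · subst hh
    have hden := (one_add_add_pos hε (hcos x) (hsin x)).ne'
    rw [deriv_deriv_exp_neg_mul_one_add_mul_cos, deriv_exp_neg_mul_one_add_mul_cos]
    field_simp
  · have : 0 ≤ |ε| := abs_nonneg ε
    exact div_pos (mul_pos (by linarith) (by linarith)) (by positivity)
  · simp only [mul_assoc 2 ε]
    exact ⟨le_div_sq_one_add_add hε (hcos x) (hsin x),
      div_sq_one_add_add_le hε (hcos x) (hsin x)⟩
end

section
/- If 0 < α < 0.25·((4/3)^{3/5} − 1), then f_α(z) = 1 − z^{1/3} + αz < 0 for all z with 1 + 4α < z < (1/(3α))^{3/2}. -/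
/-!
Substituting `u = z^{1/3}` turns `f_α(z)` into the cubic `g(u) = αu³ - u + 1`, which is convex
on `u ≥ 0`. It is therefore enough to check `g < 0` at the two endpoints `a = (1 + 4α)^{1/3}`
and `b = (3α)^{-1/2}`: there `g(a) = 1 + α(1 + 4α) - a` and `g(b) = 1 - 2b/3`, both negative
once `α ≤ 1/20`, and the hypothesis on `α` gives `α < 1/20` because `(4/3)³ < (6/5)⁵`.
-/

open Real Set

lemma rpow_one_third_pow_three {x : ℝ} (hx : 0 ≤ x) : (x ^ ((1 : ℝ) / 3)) ^ 3 = x := by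
  simpa [one_div] using rpow_inv_natCast_pow hx (n := 3) three_ne_zero

lemma four_thirds_rpow_three_fifths_lt : (4 / 3 : ℝ) ^ ((3 : ℝ) / 5) < 6 / 5 := by
  have h5 : ((4 / 3 : ℝ) ^ ((3 : ℝ) / 5)) ^ 5 = (4 / 3) ^ 3 := by
    rw [← rpow_natCast, ← rpow_mul (by norm_num)]
    norm_num
  have : ((4 / 3 : ℝ) ^ ((3 : ℝ) / 5)) ^ 5 < (6 / 5) ^ 5 := by rw [h5]; norm_num
  exact lt_of_pow_lt_pow_left₀ 5 (by norm_num) this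

lemma convexOn_cubic {α : ℝ} (hα : 0 ≤ α) :
    ConvexOn ℝ (Ici 0) fun u : ℝ => α * u ^ 3 - u + 1 :=
  ((((convexOn_pow 3).smul hα).sub (concaveOn_id (convex_Ici 0))).add_const 1)

lemma cubic_neg_of_mem_Icc {α a b u : ℝ} (hα : 0 ≤ α) (ha : 0 ≤ a) (hu : u ∈ Icc a b)
    (hga : α * a ^ 3 - a + 1 < 0) (hgb : α * b ^ 3 - b + 1 < 0) :
    α * u ^ 3 - u + 1 < 0 := by
  have hab : a ≤ b := hu.1.trans hu.2
  have hb : (0 : ℝ) ≤ b := ha.trans hab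
  refine ((convexOn_cubic hα).le_on_segment ha hb ?_).trans_lt (max_lt hga hgb)
  rwa [segment_eq_Icc hab]

/-- Since `(1 + α + 4α²)³ < 1 + 4α` for `α ≤ 1/20`, the cube root `a` of `1 + 4α` exceeds
`1 + α + 4α²`. -/
lemma cubic_neg_of_cube_eq {α a : ℝ} (hα : 0 < α) (hα' : α ≤ 1 / 20) (ha : 0 ≤ a)
    (ha3 : a ^ 3 = 1 + 4 * α) : α * a ^ 3 - a + 1 < 0 := by
  have hsmall : 15 * α + 25 * α ^ 2 + 60 * α ^ 3 + 48 * α ^ 4 + 64 * α ^ 5 < 1 := by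
    nlinarith [pow_le_pow_left₀ hα.le hα' 2, pow_le_pow_left₀ hα.le hα' 3,
      pow_le_pow_left₀ hα.le hα' 4, pow_le_pow_left₀ hα.le hα' 5]
  have hcube : (1 + α + 4 * α ^ 2) ^ 3 < a ^ 3 := by
    rw [ha3]
    nlinarith [mul_lt_mul_of_pos_left hsmall hα]
  have := lt_of_pow_lt_pow_left₀ 3 ha hcube
  rw [ha3]
  nlinarith

lemma cubic_neg_of_three_mul_sq_eq_one {α b : ℝ} (hα : 0 < α) (hα' : α < 4 / 27) (hb : 0 ≤ b)
    (hb2 : 3 * α * b ^ 2 = 1) : α * b ^ 3 - b + 1 < 0 := by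
  have hb' : 3 / 2 < b := by
    by_contra! h
    nlinarith [mul_le_mul_of_nonneg_left (pow_le_pow_left₀ hb h 2) hα.le]
  have : 3 * (α * b ^ 3) = b := by linear_combination b * hb2
  linarith

/-- If `0 < α < 0.25·((4/3)^{3/5} − 1)`, then `f_α(z) = 1 − z^{1/3} + αz < 0` for all
`z` with `1 + 4α < z < (1/(3α))^{3/2}`. -/
theorem stmt_12 (α : ℝ) (hα : 0 < α)
    (hα2 : α < 0.25 * ((4/3 : ℝ) ^ ((3:ℝ)/5) - 1)) :
    ∀ z : ℝ, 1 + 4 * α < z → z < (1 / (3 * α)) ^ ((3:ℝ)/2) →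
      1 - z ^ ((1:ℝ)/3) + α * z < 0 := by
  have hα' : α < 1 / 20 := by linarith [four_thirds_rpow_three_fifths_lt]
  intro z hz1 hz2
  set c := 1 / (3 * α) with hc_def
  have hc : 0 ≤ c := by positivity
  set u := z ^ ((1 : ℝ) / 3)
  set a := (1 + 4 * α) ^ ((1 : ℝ) / 3)
  set b := √c with hb_def
  have hu : 0 ≤ u := rpow_nonneg (by linarith) _
  have ha : 0 ≤ a := rpow_nonneg (by linarith) _
  have hb : 0 ≤ b := sqrt_nonneg c
  have hu3 : u ^ 3 = z := rpow_one_third_pow_three (by linarith)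
  have ha3 : a ^ 3 = 1 + 4 * α := rpow_one_third_pow_three (by linarith)
  have hb3 : b ^ 3 = c ^ ((3 : ℝ) / 2) := by
    rw [hb_def, sqrt_eq_rpow, ← rpow_natCast, ← rpow_mul hc]; norm_num
  have hb2 : 3 * α * b ^ 2 = 1 := by
    rw [sq_sqrt hc, hc_def]; field_simp
  have hau : a ≤ u := (pow_le_pow_iff_left₀ ha hu three_ne_zero).1 (by linarith)
  have hub : u ≤ b := (pow_le_pow_iff_left₀ hu hb three_ne_zero).1 (by linarith)
  have key := cubic_neg_of_mem_Icc hα.le ha ⟨hau, hub⟩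
    (cubic_neg_of_cube_eq hα hα'.le ha ha3)
    (cubic_neg_of_three_mul_sq_eq_one hα (by linarith) hb hb2)
  rw [hu3] at key
  linarith
end

section
/- Let h: [0,∞) → (0,∞) be C², decreasing, convex, integrable, tending to 0 at infinity, with β function satisfying sup β ≤ 1 (equivalently h is log-concave). Define g(x) = (2/9)·(1/h(x))·∫_x^∞ h(x')/x'^{5/3} dx'. Then g is monotonically decreasing on (0,∞). -/
/-! Log-concavity of `h` means that `h' / h` decreases, so `h` lies below its exponential tangent:
`h t ≤ h x * exp (h' x / h x * (t - x))` for `t ≥ x`. As `t ^ (-5/3)` decreases as well, integrating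
this bound gives `-h' x * ∫_x^∞ h t / t ^ (5/3) dt ≤ h x ^ 2 / x ^ (5/3)`, which is exactly the sign
condition `g' x ≤ 0`. Only positivity, monotonicity and continuity of the weight `t ^ (-5/3)` enter. -/

open MeasureTheory Set Real

theorem antitoneOn_of_hasDerivAt_nonpos {D : Set ℝ} (hD : Convex ℝ D) {f f' : ℝ → ℝ}
    (hf : ∀ x ∈ D, HasDerivAt f (f' x) x) (hf' : ∀ x ∈ interior D, f' x ≤ 0) :
    AntitoneOn f D :=
  antitoneOn_of_hasDerivWithinAt_nonpos hD
    (fun x hx => (hf x hx).continuousAt.continuousWithinAt)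
    (fun x hx => (hf x (interior_subset hx)).hasDerivWithinAt) hf'

/-- `h'' h ≤ h'²` is the sign condition for `(h' / h)' = (h'' h - h'²) / h²`. -/
theorem antitoneOn_div_of_mul_le_sq {h h' h'' : ℝ → ℝ} {D : Set ℝ} (hD : Convex ℝ D)
    (hpos : ∀ x ∈ D, 0 < h x) (hd : ∀ x ∈ D, HasDerivAt h (h' x) x)
    (hd' : ∀ x ∈ D, HasDerivAt h' (h'' x) x) (hle : ∀ x ∈ D, h'' x * h x ≤ h' x ^ 2) :
    AntitoneOn (fun x => h' x / h x) D := by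
  refine antitoneOn_of_hasDerivAt_nonpos hD
    (fun x hx => (hd' x hx).div (hd x hx) (hpos x hx).ne') fun x hx => ?_
  have hx := interior_subset hx
  exact div_nonpos_of_nonpos_of_nonneg (by nlinarith [hle x hx]) (sq_nonneg _)

theorem le_mul_exp_of_antitoneOn_div {h h' : ℝ → ℝ} {x t : ℝ} (hxt : x ≤ t)
    (hpos : ∀ s ∈ Icc x t, 0 < h s) (hd : ∀ s ∈ Icc x t, HasDerivAt h (h' s) s)
    (hanti : AntitoneOn (fun s => h' s / h s) (Icc x t)) :
    h t ≤ h x * exp (h' x / h x * (t - x)) := by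
  have hx : x ∈ Icc x t := left_mem_Icc.2 hxt
  have ht : t ∈ Icc x t := right_mem_Icc.2 hxt
  set c := h' x / h x
  have hu : AntitoneOn (fun s => log (h s) - c * s) (Icc x t) := by
    refine antitoneOn_of_hasDerivAt_nonpos (convex_Icc x t)
      (fun s hs => ((hd s hs).log (hpos s hs).ne').sub ((hasDerivAt_id s).const_mul c))
      fun s hs => ?_
    have hs := interior_subset hs
    simpa using hanti hx hs hs.1
  have hlog : log (h t) ≤ log (h x) + c * (t - x) := by
    have := hu hx ht hxt
    simp only at this
    linarith
  rw [log_le_iff_le_exp (hpos t ht), exp_add, exp_log (hpos x hx)] at hlog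
  exact hlog

theorem integrableOn_exp_mul_sub_Ioi {c : ℝ} (hc : c < 0) (x : ℝ) :
    IntegrableOn (fun t => exp (c * (t - x))) (Ioi x) := by
  simp_rw [mul_sub, exp_sub]
  exact (integrableOn_exp_mul_Ioi hc x).div_const _

theorem integral_exp_mul_sub_Ioi {c : ℝ} (hc : c < 0) (x : ℝ) :
    ∫ t in Ioi x, exp (c * (t - x)) = -c⁻¹ := by
  simp_rw [mul_sub, exp_sub]
  rw [integral_div, integral_exp_mul_Ioi hc]
  field_simp

theorem hasDerivAt_integral_Ioi {f : ℝ → ℝ} {a x : ℝ} (hf : IntegrableOn f (Ioi a))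
    (hax : a < x) (hfx : ContinuousAt f x) :
    HasDerivAt (fun y => ∫ t in Ioi y, f t) (-f x) x := by
  have hnhds : Ioi a ∈ nhds x := Ioi_mem_nhds hax
  have hcongr : (fun y => (∫ t in Ioi a, f t) - ∫ t in a..y, f t) =ᶠ[nhds x]
      fun y => ∫ t in Ioi y, f t :=
    Filter.eventuallyEq_of_mem hnhds fun y hy => by
      rw [← intervalIntegral.integral_Ioi_sub_Ioi hf (le_of_lt hy), sub_sub_cancel]
  have hint : IntervalIntegrable f volume a x :=
    (intervalIntegrable_iff_integrableOn_Ioc_of_le hax.le).2 (hf.mono_set Ioc_subset_Ioi_self)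
  refine (((hasDerivAt_const x _).sub ?_).congr_of_eventuallyEq hcongr.symm).congr_deriv
    (zero_sub _)
  exact intervalIntegral.integral_hasDerivAt_right hint
    (AEStronglyMeasurable.stronglyMeasurableAtFilter_of_mem hf.aestronglyMeasurable hnhds) hfx

section LogConcaveTail

variable {h h' w : ℝ → ℝ} {a : ℝ}

theorem mul_le_mul_exp_of_antitoneOn_div {x t : ℝ} (hax : a < x) (hxt : x ≤ t)
    (hpos : ∀ s > a, 0 < h s) (hd : ∀ s > a, HasDerivAt h (h' s) s)
    (hlc : AntitoneOn (fun s => h' s / h s) (Ioi a)) (hw0 : ∀ s > a, 0 ≤ w s)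
    (hw : AntitoneOn w (Ioi a)) :
    h t * w t ≤ h x * w x * exp (h' x / h x * (t - x)) := by
  have hsub : Icc x t ⊆ Ioi a := fun s hs => hax.trans_le hs.1
  have hat : a < t := hax.trans_le hxt
  calc h t * w t ≤ h x * exp (h' x / h x * (t - x)) * w x :=
        mul_le_mul (le_mul_exp_of_antitoneOn_div hxt (fun s hs => hpos s (hsub hs))
          (fun s hs => hd s (hsub hs)) (hlc.mono hsub)) (hw hax hat hxt) (hw0 t hat)
          (mul_nonneg (hpos x hax).le (exp_pos _).le)
    _ = h x * w x * exp (h' x / h x * (t - x)) := by ring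

theorem integrableOn_mul_Ioi {x : ℝ} (hax : a < x)
    (hpos : ∀ s > a, 0 < h s) (hd : ∀ s > a, HasDerivAt h (h' s) s) (hdec : h' x < 0)
    (hlc : AntitoneOn (fun s => h' s / h s) (Ioi a)) (hw0 : ∀ s > a, 0 ≤ w s)
    (hw : AntitoneOn w (Ioi a)) (hwc : ContinuousOn w (Ioi a)) :
    IntegrableOn (fun t => h t * w t) (Ioi x) := by
  have hc : h' x / h x < 0 := div_neg_of_neg_of_pos hdec (hpos x hax)
  refine ((integrableOn_exp_mul_sub_Ioi hc x).const_mul (h x * w x)).mono' ?_ ?_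
  · refine ContinuousOn.aestronglyMeasurable (fun s hs => ?_) measurableSet_Ioi
    have has : a < s := hax.trans hs
    exact ((hd s has).continuousAt.continuousWithinAt.mono (Ioi_subset_Ioi hax.le)).mul
      ((hwc s has).mono (Ioi_subset_Ioi hax.le))
  · refine (ae_restrict_iff' measurableSet_Ioi).2 (Filter.Eventually.of_forall fun t ht => ?_)
    have hat : a < t := hax.trans ht
    rw [Real.norm_of_nonneg (mul_nonneg (hpos t hat).le (hw0 t hat))]
    exact mul_le_mul_exp_of_antitoneOn_div hax (le_of_lt ht) hpos hd hlc hw0 hw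

theorem neg_mul_integral_mul_Ioi_le {x : ℝ} (hax : a < x)
    (hpos : ∀ s > a, 0 < h s) (hd : ∀ s > a, HasDerivAt h (h' s) s) (hdec : h' x < 0)
    (hlc : AntitoneOn (fun s => h' s / h s) (Ioi a)) (hw0 : ∀ s > a, 0 ≤ w s)
    (hw : AntitoneOn w (Ioi a)) (hwc : ContinuousOn w (Ioi a)) :
    -h' x * ∫ t in Ioi x, h t * w t ≤ h x ^ 2 * w x := by
  have hhx := hpos x hax
  have hc : h' x / h x < 0 := div_neg_of_neg_of_pos hdec hhx
  have hle : ∫ t in Ioi x, h t * w t ≤ ∫ t in Ioi x, h x * w x * exp (h' x / h x * (t - x)) :=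
    setIntegral_mono_on (integrableOn_mul_Ioi hax hpos hd hdec hlc hw0 hw hwc)
      ((integrableOn_exp_mul_sub_Ioi hc x).const_mul _) measurableSet_Ioi
      fun t ht => mul_le_mul_exp_of_antitoneOn_div hax (le_of_lt ht) hpos hd hlc hw0 hw
  rw [integral_const_mul, integral_exp_mul_sub_Ioi hc] at hle
  calc -h' x * ∫ t in Ioi x, h t * w t ≤ -h' x * (h x * w x * -(h' x / h x)⁻¹) :=
        mul_le_mul_of_nonneg_left hle (neg_nonneg.2 hdec.le)
    _ = h x ^ 2 * w x := by field_simp [hdec.ne]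

theorem antitoneOn_inv_mul_integral_mul_Ioi
    (hpos : ∀ s > a, 0 < h s) (hd : ∀ s > a, HasDerivAt h (h' s) s) (hdec : ∀ s > a, h' s < 0)
    (hlc : AntitoneOn (fun s => h' s / h s) (Ioi a)) (hw0 : ∀ s > a, 0 ≤ w s)
    (hw : AntitoneOn w (Ioi a)) (hwc : ContinuousOn w (Ioi a)) :
    AntitoneOn (fun x => (h x)⁻¹ * ∫ t in Ioi x, h t * w t) (Ioi a) := by
  have hderiv : ∀ x > a, HasDerivAt (fun y => (h y)⁻¹ * ∫ t in Ioi y, h t * w t)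
      (-h' x / h x ^ 2 * (∫ t in Ioi x, h t * w t) + (h x)⁻¹ * -(h x * w x)) x := by
    intro x hax
    obtain ⟨b, hab, hbx⟩ := exists_between hax
    have hF := hasDerivAt_integral_Ioi
      (integrableOn_mul_Ioi hab hpos hd (hdec b hab) hlc hw0 hw hwc) hbx
      ((hd x hax).continuousAt.mul (hwc.continuousAt (Ioi_mem_nhds hax)))
    exact ((hd x hax).inv (hpos x hax).ne').mul hF
  refine antitoneOn_of_hasDerivAt_nonpos (convex_Ioi a) hderiv fun x hx => ?_
  rw [interior_Ioi] at hx
  have hkey := neg_mul_integral_mul_Ioi_le hx hpos hd (hdec x hx) hlc hw0 hw hwc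
  have hform : -h' x / h x ^ 2 * (∫ t in Ioi x, h t * w t) + (h x)⁻¹ * -(h x * w x)
      = (-h' x * (∫ t in Ioi x, h t * w t) - h x ^ 2 * w x) / h x ^ 2 := by
    field_simp [(hpos x hx).ne']
    ring
  rw [hform]
  exact div_nonpos_of_nonpos_of_nonneg (sub_nonpos.2 hkey) (sq_nonneg _)

end LogConcaveTail

theorem stmt_13_general (h h' h'' : ℝ → ℝ)
    (hpos : ∀ x ≥ (0:ℝ), 0 < h x)
    (hd1 : ∀ x ≥ (0:ℝ), HasDerivAt h (h' x) x)
    (hd2 : ∀ x ≥ (0:ℝ), HasDerivAt h' (h'' x) x)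
    (hdec : ∀ x ≥ (0:ℝ), h' x < 0)
    (hbeta : ∀ x ≥ (0:ℝ), h'' x * h x / (h' x) ^ 2 ≤ 1)
    (g : ℝ → ℝ)
    (hg : g = fun x => (2/9) * (1 / h x) * ∫ t in Set.Ioi x, h t / t ^ ((5:ℝ)/3)) :
    AntitoneOn g (Set.Ioi 0) := by
  have hlc : AntitoneOn (fun s => h' s / h s) (Ioi 0) :=
    antitoneOn_div_of_mul_le_sq (convex_Ioi 0) (fun x hx => hpos x hx.le)
      (fun x hx => hd1 x hx.le) (fun x hx => hd2 x hx.le) fun x hx =>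
      (div_le_one (sq_pos_of_neg (hdec x hx.le))).1 (hbeta x hx.le)
  have hw : AntitoneOn (fun t : ℝ => (t ^ ((5:ℝ)/3))⁻¹) (Ioi 0) := fun x hx y _ hxy =>
    inv_anti₀ (rpow_pos_of_pos hx _) (rpow_le_rpow (le_of_lt hx) hxy (by norm_num))
  have hwc : ContinuousOn (fun t : ℝ => (t ^ ((5:ℝ)/3))⁻¹) (Ioi 0) := fun x hx =>
    ((continuousAt_rpow_const x _ (Or.inl (ne_of_gt hx))).inv₀
      (rpow_pos_of_pos hx _).ne').continuousWithinAt
  have hG := antitoneOn_inv_mul_integral_mul_Ioi (fun x hx => hpos x hx.le)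
    (fun x hx => hd1 x hx.le) (fun x hx => hdec x hx.le) hlc
    (fun x hx => (inv_pos.2 (rpow_pos_of_pos hx _)).le) hw hwc
  subst hg
  simp_rw [one_div, mul_assoc, div_eq_mul_inv]
  exact fun x hx y hy hxy => mul_le_mul_of_nonneg_left (hG hx hy hxy) (by norm_num)

/-- Let `h : [0,∞) → (0,∞)` be C², decreasing, convex, integrable, tending to `0` at
infinity, with β function bounded by `1`. Then
`g(x) = (2/9)·(1/h(x))·∫_x^∞ h(x')/x'^{5/3} dx'` is monotonically decreasing on
`(0,∞)`. -/
theorem stmt_13 (h h' h'' : ℝ → ℝ)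
    (hpos : ∀ x ≥ (0:ℝ), 0 < h x)
    (hd1 : ∀ x ≥ (0:ℝ), HasDerivAt h (h' x) x)
    (hd2 : ∀ x ≥ (0:ℝ), HasDerivAt h' (h'' x) x)
    (hc : ContinuousOn h'' (Set.Ici 0))
    (hdec : ∀ x ≥ (0:ℝ), h' x < 0)
    (hconv : ∀ x ≥ (0:ℝ), 0 ≤ h'' x)
    (hint : IntegrableOn h (Set.Ici 0))
    (hlim : Filter.Tendsto h Filter.atTop (nhds 0))
    (hbeta : ∀ x ≥ (0:ℝ), h'' x * h x / (h' x) ^ 2 ≤ 1)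
    (g : ℝ → ℝ)
    (hg : g = fun x => (2/9) * (1 / h x) * ∫ t in Set.Ioi x, h t / t ^ ((5:ℝ)/3)) :
    AntitoneOn g (Set.Ioi 0) :=
  stmt_13_general h h' h'' hpos hd1 hd2 hdec hbeta g hg
end

section
/- For 0 < α < 4/27, with a_α, Γ_α as above, the identity f_α(z)·e^{−αΓ_α(z)} = ∫_z^{a_α} (1/(3z'^{2/3}))·e^{−αΓ_α(z')} dz' holds for all 0 ≤ z ≤ a_α; in particular ∫₀^{a_α} z^{−2/3} e^{−αΓ_α(z)} dz = 3. -/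
/-!
With `E = exp (-(α Γ))` and `Γ' = 1 / f`, the product `g = f E` satisfies
`g' = (f' - α) E = -E / (3 z^{2/3})` on `(0, a)`. Since `Γ ≥ 0` on `[0, a]`, the factor `E`
stays in `(0, 1]`; hence `g` is continuous at `a` with `g a = 0` even though `Γ` blows up there,
and `z^{-2/3} E` is integrable at `0`. The fundamental theorem of calculus on `[z, a]` gives the
identity, and `g 0 = 1` gives the value `3`.
-/

open MeasureTheory Set Filter Topology Real

lemma ContinuousWithinAt.mul_of_apply_eq_zero {X R : Type*} [TopologicalSpace X]
    [NonUnitalSeminormedRing R] {f k : X → R} {s : Set X} {x : X} {C : ℝ}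
    (hf : ContinuousWithinAt f s x) (hfx : f x = 0) (hk : ∀ᶠ y in 𝓝[s] x, ‖k y‖ ≤ C) :
    ContinuousWithinAt (fun y => f y * k y) s x := by
  have hf0 : Tendsto f (𝓝[s] x) (𝓝 0) := hfx ▸ hf
  simpa [ContinuousWithinAt, hfx] using hf0.zero_mul_isBoundedUnder_le ⟨C, hk⟩

lemma ContinuousOn.pos_of_forall_ne_zero {f : ℝ → ℝ} {a b : ℝ} (hf : ContinuousOn f (Icc a b))
    (hfa : 0 < f a) (hne : ∀ t ∈ Ioo a b, f t ≠ 0) : ∀ t ∈ Ico a b, 0 < f t := by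
  rintro t ⟨hat, htb⟩
  rcases hat.eq_or_lt with rfl | hat
  · exact hfa
  by_contra! hft
  obtain ⟨c, hc, hfc⟩ := intermediate_value_Ioo' hat.le (hf.mono (Icc_subset_Icc_right htb.le))
    ⟨hft.lt_of_ne (hne t ⟨hat, htb⟩), hfa⟩
  exact hne c ⟨hc.1, hc.2.trans htb⟩ hfc

lemma norm_exp_neg_mul_le_one {c x : ℝ} (hc : 0 ≤ c) (hx : 0 ≤ x) : ‖exp (-(c * x))‖ ≤ 1 := by
  rw [norm_of_nonneg (exp_pos _).le, exp_le_one_iff, neg_nonpos]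
  exact mul_nonneg hc hx

lemma hasDerivAt_integral_one_div {f : ℝ → ℝ} (hf : Continuous f) {z : ℝ}
    (hne : ∀ t ∈ uIcc 0 z, f t ≠ 0) :
    HasDerivAt (fun x => ∫ t in (0:ℝ)..x, 1 / f t) (1 / f z) z :=
  intervalIntegral.integral_hasDerivAt_right
    (continuousOn_const.div hf.continuousOn hne).intervalIntegrable
    (hf.measurable.const_div 1).aestronglyMeasurable.stronglyMeasurableAtFilter
    (continuousAt_const.div hf.continuousAt (hne z right_mem_uIcc))

lemma hasDerivAt_mul_exp_neg_mul {f Γ : ℝ → ℝ} {f' c t : ℝ} (hf : HasDerivAt f f' t)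
    (hΓ : HasDerivAt Γ (1 / f t) t) (hft : f t ≠ 0) :
    HasDerivAt (fun x => f x * exp (-(c * Γ x))) ((f' - c) * exp (-(c * Γ t))) t := by
  refine (hf.mul ((hΓ.const_mul c).neg.exp)).congr_deriv ?_
  simp only [Pi.neg_apply]
  field_simp
  ring

lemma intervalIntegrable_rpow_mul {E : ℝ → ℝ} {r a C : ℝ} (hr : -1 < r) (ha : 0 ≤ a)
    (hE : ContinuousOn E (Ioo 0 a)) (hEC : ∀ t ∈ Ioc 0 a, ‖E t‖ ≤ C) :
    IntervalIntegrable (fun t => t ^ r * E t) volume 0 a := by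
  refine ((intervalIntegral.intervalIntegrable_rpow' hr).mul_const C).mono_fun' ?_ ?_
  · rw [uIoc_of_le ha, ← Measure.restrict_congr_set Ioo_ae_eq_Ioc]
    exact ((continuousOn_id.rpow_const fun t ht => Or.inl ht.1.ne').mul hE).aestronglyMeasurable
      measurableSet_Ioo
  · rw [uIoc_of_le ha]
    filter_upwards [ae_restrict_mem measurableSet_Ioc] with t ht
    rw [norm_mul, norm_of_nonneg (rpow_nonneg ht.1.le r)]
    exact mul_le_mul_of_nonneg_left (hEC t ht) (rpow_nonneg ht.1.le r)

theorem mul_exp_neg_mul_eq_integral {f Γ w : ℝ → ℝ} {a c : ℝ} (hf : ContinuousOn f (Icc 0 a))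
    (hfa : f a = 0) (hne : ∀ t ∈ Ioo 0 a, f t ≠ 0) (hf' : ∀ t ∈ Ioo 0 a, HasDerivAt f (c - w t) t)
    (hΓ : ∀ t ∈ Ico 0 a, HasDerivAt Γ (1 / f t) t) (hΓnn : ∀ t ∈ Icc 0 a, 0 ≤ Γ t) (hc : 0 ≤ c)
    (hint : IntervalIntegrable (fun t => w t * exp (-(c * Γ t))) volume 0 a)
    {z : ℝ} (hz : z ∈ Icc 0 a) :
    f z * exp (-(c * Γ z)) = ∫ t in z..a, w t * exp (-(c * Γ t)) := by
  have hcont : ContinuousOn (fun x => f x * exp (-(c * Γ x))) (Icc z a) := by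
    intro t ht
    have ht0 : t ∈ Icc 0 a := ⟨hz.1.trans ht.1, ht.2⟩
    rcases ht.2.eq_or_lt with rfl | hta
    · refine ((hf t ht0).mul_of_apply_eq_zero (C := 1) hfa ?_).mono (Icc_subset_Icc_left hz.1)
      filter_upwards [self_mem_nhdsWithin] with s hs
      exact norm_exp_neg_mul_le_one hc (hΓnn s hs)
    · exact ((hf t ht0).mul ((hΓ t ⟨ht0.1, hta⟩).continuousAt.continuousWithinAt.const_mul c
        |>.neg.rexp)).mono_left (nhdsWithin_mono _ (Icc_subset_Icc_left hz.1))
  have hderiv : ∀ t ∈ Ioo z a,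
      HasDerivAt (fun x => f x * exp (-(c * Γ x))) (-(w t * exp (-(c * Γ t)))) t := by
    intro t ht
    have ht0 : t ∈ Ioo 0 a := ⟨hz.1.trans_lt ht.1, ht.2⟩
    exact (hasDerivAt_mul_exp_neg_mul (hf' t ht0) (hΓ t (Ioo_subset_Ico_self ht0))
      (hne t ht0)).congr_deriv (by ring)
  have hftc := intervalIntegral.integral_eq_sub_of_hasDerivAt_of_le hz.2 hcont hderiv
    (hint.neg.mono_set (uIcc_subset_uIcc_right (mem_uIcc_of_le hz.1 hz.2)))
  simp only [intervalIntegral.integral_neg, hfa, zero_mul, zero_sub, neg_inj] at hftc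
  exact hftc.symm

lemma hasDerivAt_one_sub_rpow_add_mul (α : ℝ) {t : ℝ} (ht : 0 < t) :
    HasDerivAt (fun z : ℝ => 1 - z ^ ((1:ℝ)/3) + α * z) (α - t ^ (-(2:ℝ)/3) / 3) t := by
  refine (((hasDerivAt_rpow_const (p := (1:ℝ)/3) (Or.inl ht.ne')).const_sub 1).add
    ((hasDerivAt_id t).const_mul α)).congr_deriv ?_
  rw [show (1:ℝ)/3 - 1 = -2/3 by norm_num]
  ring

lemma one_div_three_mul_rpow {t : ℝ} (ht : 0 ≤ t) :
    1 / (3 * t ^ ((2:ℝ)/3)) = t ^ (-(2:ℝ)/3) / 3 := by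
  rw [show -(2:ℝ)/3 = -(2/3) by norm_num, rpow_neg ht]
  ring

theorem stmt_16_general (α a : ℝ) (hα : 0 < α)
    (f Γ : ℝ → ℝ)
    (hf : f = fun z => 1 - z ^ ((1:ℝ)/3) + α * z)
    (ha1 : 1 < a) (ha : f a = 0) (hamin : ∀ z ∈ Set.Ioo (0:ℝ) a, f z ≠ 0)
    (hΓ : Γ = fun z => ∫ t in (0:ℝ)..z, 1 / f t) :
    (∀ z ∈ Set.Icc (0:ℝ) a,
      f z * Real.exp (-(α * Γ z)) =
        ∫ t in z..a, (1 / (3 * t ^ ((2:ℝ)/3))) * Real.exp (-(α * Γ t))) ∧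
    (∫ t in (0:ℝ)..a, t ^ (-(2:ℝ)/3) * Real.exp (-(α * Γ t))) = 3 := by
  have ha0 : 0 ≤ a := by linarith
  have hfc : Continuous f := hf ▸
    (continuous_const.sub (continuous_rpow_const (by norm_num))).add (continuous_const_mul α)
  have hf0 : f 0 = 1 := by simp [hf]
  have hfpos := hfc.continuousOn.pos_of_forall_ne_zero (hf0 ▸ one_pos) hamin
  have hfnn : ∀ t ∈ Icc 0 a, 0 ≤ f t := fun t ht =>
    ht.2.eq_or_lt.elim (fun h => (h ▸ ha).ge) fun h => (hfpos t ⟨ht.1, h⟩).le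
  have hΓ' : ∀ t ∈ Ico 0 a, HasDerivAt Γ (1 / f t) t := fun t ht =>
    hΓ ▸ hasDerivAt_integral_one_div hfc fun s hs =>
      (hfpos s (Icc_subset_Ico_right ht.2 (uIcc_of_le ht.1 ▸ hs))).ne'
  have hΓnn : ∀ t ∈ Icc 0 a, 0 ≤ Γ t := fun t ht => hΓ ▸ intervalIntegral.integral_nonneg ht.1
    fun s hs => one_div_nonneg.2 (hfnn s (Icc_subset_Icc_right ht.2 hs))
  have hint : IntervalIntegrable (fun t => t ^ (-(2:ℝ)/3) * exp (-(α * Γ t))) volume 0 a :=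
    intervalIntegrable_rpow_mul (by norm_num) ha0
      (fun t ht => ((hΓ' t (Ioo_subset_Ico_self ht)).continuousAt.const_mul α).neg.rexp
        |>.continuousWithinAt)
      fun t ht => norm_exp_neg_mul_le_one hα.le (hΓnn t (Ioc_subset_Icc_self ht))
  have hid : ∀ z ∈ Icc 0 a,
      f z * exp (-(α * Γ z)) = ∫ t in z..a, t ^ (-(2:ℝ)/3) / 3 * exp (-(α * Γ t)) :=
    fun z hz => mul_exp_neg_mul_eq_integral hfc.continuousOn ha hamin
      (fun t ht => hf ▸ hasDerivAt_one_sub_rpow_add_mul α ht.1) hΓ' hΓnn hα.le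
      (by simpa only [div_mul_eq_mul_div] using hint.div_const 3) hz
  refine ⟨fun z hz => (hid z hz).trans (intervalIntegral.integral_congr fun t ht => ?_), ?_⟩
  · rw [one_div_three_mul_rpow (hz.1.trans (uIcc_of_le hz.2 ▸ ht).1)]
  · have hΓ0 : Γ 0 = 0 := by simp [hΓ]
    have h1 := hid 0 ⟨le_rfl, ha0⟩
    simp only [hf0, hΓ0, mul_zero, neg_zero, exp_zero, mul_one, div_mul_eq_mul_div,
      intervalIntegral.integral_div] at h1
    linarith

/-- For `0 < α < 4/27`, with `a_α`, `Γ_α` as above, the identity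
`f_α(z)·e^{−αΓ_α(z)} = ∫_z^{a_α} (1/(3z'^{2/3}))·e^{−αΓ_α(z')} dz'` holds for
`0 ≤ z ≤ a_α`; in particular `∫₀^{a_α} z^{−2/3} e^{−αΓ_α(z)} dz = 3`. -/
theorem stmt_16 (α a : ℝ) (hα : 0 < α) (hα2 : α < 4/27)
    (f Γ : ℝ → ℝ)
    (hf : f = fun z => 1 - z ^ ((1:ℝ)/3) + α * z)
    (ha1 : 1 < a) (ha : f a = 0) (hamin : ∀ z ∈ Set.Ioo (0:ℝ) a, f z ≠ 0)
    (hΓ : Γ = fun z => ∫ t in (0:ℝ)..z, 1 / f t) :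
    (∀ z ∈ Set.Icc (0:ℝ) a,
      f z * Real.exp (-(α * Γ z)) =
        ∫ t in z..a, (1 / (3 * t ^ ((2:ℝ)/3))) * Real.exp (-(α * Γ t))) ∧
    (∫ t in (0:ℝ)..a, t ^ (-(2:ℝ)/3) * Real.exp (-(α * Γ t))) = 3 :=
  stmt_16_general α a hα f Γ hf ha1 ha hamin hΓ
end

section
/- Let X be a positive random variable with ‖X‖_∞ < ∞ whose β function has a limit β₀ at ‖X‖_∞ with 0 ≤ β₀ < 1, define k(ξ) = −log P(X > x) under the change of variable ξ = −log(‖X‖_∞ − x). Then lim_{ξ→∞} k'(ξ) = β₀/(1 − β₀). -/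
open MeasureTheory Set Filter Topology Real

/-!
Since `h' = -w`, we have `β = -w' h / w²`, and `g := h / w` satisfies `g' = β - 1`. As
`0 ≤ h(x) ≤ (M - x) w(x)`, `g` tends to `0` at `M`, and L'Hôpital's rule gives
`g(x) / (M - x) → 1 - β₀`. Hence `-w'(x) (M - x) / w(x) = β(x) (M - x) / g(x) → β₀ / (1 - β₀)`,
and by the chain rule this quantity is `k'(ξ)` at `x = M - e^{-ξ}`.
-/

section Survival

variable {Ω : Type*} [MeasurableSpace Ω] {μ : Measure Ω}

lemma measure_lt_eq_zero_of_eLpNorm_top_le {X : Ω → ℝ} {t : ℝ} (ht : 0 ≤ t)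
    (hX : eLpNorm X ⊤ μ ≤ ENNReal.ofReal t) : μ {ω | t < X ω} = 0 := by
  have hle : ∀ᵐ ω ∂μ, X ω ≤ t := by
    filter_upwards [enorm_ae_le_eLpNormEssSup X μ] with ω hω
    rw [← eLpNorm_exponent_top, ← ofReal_norm] at hω
    exact (le_abs_self _).trans ((ENNReal.ofReal_le_ofReal_iff ht).1 (hω.trans hX))
  exact measure_mono_null (fun ω hω => not_le.2 hω) (ae_iff.1 hle)

lemma antitone_measure_lt_toReal [IsFiniteMeasure μ] (X : Ω → ℝ) :
    Antitone fun x => (μ {ω | x < X ω}).toReal :=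
  fun _ _ hab => ENNReal.toReal_mono (measure_ne_top μ _)
    (measure_mono fun _ hω => hab.trans_lt hω)

end Survival

section TailIntegral

variable {w w' : ℝ → ℝ} {M a x β₀ : ℝ}

lemma Antitone.nonneg_of_eqOn_zero_Ioi (hw : Antitone w) (hM : EqOn w 0 (Ioi M)) (t : ℝ) :
    0 ≤ w t := by
  have hs : max t M + 1 ∈ Ioi M := by simp only [mem_Ioi]; linarith [le_max_right t M]
  simpa [hM hs] using hw (show t ≤ max t M + 1 by linarith [le_max_left t M])

lemma setIntegral_Ioi_eq_intervalIntegral (hw : Antitone w) (hM : EqOn w 0 (Ioi M))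
    (hx : x ≤ M) : ∫ t in Ioi x, w t = ∫ t in x..M, w t := by
  rw [intervalIntegral.integral_of_le hx, ← Ioc_union_Ioi_eq_Ioi hx,
    setIntegral_union (Ioc_disjoint_Ioi le_rfl) measurableSet_Ioi hw.intervalIntegrable.1
      (integrableOn_zero.congr_fun hM.symm measurableSet_Ioi),
    setIntegral_congr_fun measurableSet_Ioi hM]
  simp

lemma hasDerivAt_setIntegral_Ioi (hw : Antitone w) (hM : EqOn w 0 (Ioi M)) (hx : x < M)
    (hc : ContinuousAt w x) : HasDerivAt (fun u => ∫ t in Ioi u, w t) (-w x) x := by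
  refine (intervalIntegral.integral_hasDerivAt_left (hw.intervalIntegrable (b := M))
    (hw.measurable.stronglyMeasurable.stronglyMeasurableAtFilter (l := 𝓝 x)) hc
    ).congr_of_eventuallyEq ?_
  filter_upwards [Iio_mem_nhds hx] with u hu
  exact setIntegral_Ioi_eq_intervalIntegral hw hM (le_of_lt hu)

lemma setIntegral_Ioi_le_mul (hw : Antitone w) (hM : EqOn w 0 (Ioi M)) (hx : x ≤ M) :
    ∫ t in Ioi x, w t ≤ (M - x) * w x := by
  rw [setIntegral_Ioi_eq_intervalIntegral hw hM hx]
  simpa [mul_comm] using intervalIntegral.integral_mono_on hx hw.intervalIntegrable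
    (intervalIntegrable_const (μ := volume)) fun t ht => hw ht.1

lemma tendsto_sub_nhdsLT_zero (M : ℝ) : Tendsto (fun x => M - x) (𝓝[<] M) (𝓝 0) := by
  have h : Tendsto (fun x => M - x) (𝓝 M) (𝓝 (M - M)) := tendsto_const_nhds.sub tendsto_id
  simpa using h.mono_left nhdsWithin_le_nhds

lemma tendsto_setIntegral_Ioi_div_nhdsLT (hw : Antitone w) (hM : EqOn w 0 (Ioi M))
    (hpos : ∀ᶠ x in 𝓝[<] M, 0 < w x) :
    Tendsto (fun x => (∫ t in Ioi x, w t) / w x) (𝓝[<] M) (𝓝 0) := by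
  refine squeeze_zero' ?_ ?_ (tendsto_sub_nhdsLT_zero M)
  · exact Eventually.of_forall fun x => div_nonneg
      (setIntegral_nonneg measurableSet_Ioi fun t _ => hw.nonneg_of_eqOn_zero_Ioi hM t)
      (hw.nonneg_of_eqOn_zero_Ioi hM x)
  · filter_upwards [hpos, self_mem_nhdsWithin] with x hx hxM
    exact (div_le_iff₀ hx).2 (setIntegral_Ioi_le_mul hw hM (le_of_lt hxM))

theorem tendsto_setIntegral_Ioi_div_div_sub (hw : Antitone w) (hM : EqOn w 0 (Ioi M))
    (ha : a < M) (hpos : ∀ x ∈ Ioo a M, 0 < w x)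
    (hw' : ∀ x ∈ Ioo a M, HasDerivAt w (w' x) x)
    (hbeta : Tendsto (fun x => -w' x * (∫ t in Ioi x, w t) / w x ^ 2) (𝓝[<] M) (𝓝 β₀)) :
    Tendsto (fun x => (∫ t in Ioi x, w t) / w x / (M - x)) (𝓝[<] M) (𝓝 (1 - β₀)) := by
  have hg : ∀ x ∈ Ioo a M, HasDerivAt (fun u => (∫ t in Ioi u, w t) / w u)
      (-w' x * (∫ t in Ioi x, w t) / w x ^ 2 - 1) x := by
    intro x hx
    have hwx := (hpos x hx).ne'
    refine ((hasDerivAt_setIntegral_Ioi hw hM hx.2 (hw' x hx).continuousAt).div (hw' x hx)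
      hwx).congr_deriv ?_
    field_simp
    ring
  have hdiv : Tendsto (fun x => (-w' x * (∫ t in Ioi x, w t) / w x ^ 2 - 1) / -1) (𝓝[<] M)
      (𝓝 (1 - β₀)) := by
    convert (hbeta.sub_const 1).div_const (-1) using 2
    ring
  exact HasDerivAt.lhopital_zero_left_on_Ioo ha hg (fun x _ => (hasDerivAt_id' x).const_sub M)
    (fun _ _ => by norm_num)
    (tendsto_setIntegral_Ioi_div_nhdsLT hw hM (eventually_of_mem (Ioo_mem_nhdsLT ha) hpos))
    (tendsto_sub_nhdsLT_zero M) hdiv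

theorem tendsto_neg_deriv_mul_sub_div (hw : Antitone w) (hM : EqOn w 0 (Ioi M))
    (ha : a < M) (hpos : ∀ x ∈ Ioo a M, 0 < w x)
    (hw' : ∀ x ∈ Ioo a M, HasDerivAt w (w' x) x) (hβ₁ : β₀ ≠ 1)
    (hbeta : Tendsto (fun x => -w' x * (∫ t in Ioi x, w t) / w x ^ 2) (𝓝[<] M) (𝓝 β₀)) :
    Tendsto (fun x => -w' x * (M - x) / w x) (𝓝[<] M) (𝓝 (β₀ / (1 - β₀))) := by
  have hβ : 1 - β₀ ≠ 0 := sub_ne_zero.2 hβ₁.symm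
  have hratio := tendsto_setIntegral_Ioi_div_div_sub hw hM ha hpos hw' hbeta
  refine (hbeta.div hratio hβ).congr' ?_
  filter_upwards [hratio.eventually_ne hβ, Ioo_mem_nhdsLT ha] with x hne hx
  have hwx := (hpos x hx).ne'
  have hMx : M - x ≠ 0 := sub_ne_zero.2 hx.2.ne'
  have hhx : ∫ t in Ioi x, w t ≠ 0 := fun h0 => hne (by simp [h0])
  rw [Pi.div_apply]
  field_simp

end TailIntegral

lemma tendsto_sub_exp_neg_atTop (M : ℝ) : Tendsto (fun ξ => M - exp (-ξ)) atTop (𝓝[<] M) := by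
  refine tendsto_nhdsWithin_iff.2 ⟨?_, Eventually.of_forall fun ξ => sub_lt_self _ (exp_pos _)⟩
  simpa using tendsto_const_nhds.sub (tendsto_exp_atBot.comp tendsto_neg_atTop_atBot)

lemma hasDerivAt_neg_log_comp_sub_exp_neg {w : ℝ → ℝ} {w'x M ξ : ℝ}
    (hw : HasDerivAt w w'x (M - exp (-ξ))) (hpos : w (M - exp (-ξ)) ≠ 0) :
    HasDerivAt (fun ξ => -log (w (M - exp (-ξ)))) (-w'x * exp (-ξ) / w (M - exp (-ξ))) ξ := by
  have hsub : HasDerivAt (fun ξ => M - exp (-ξ)) (exp (-ξ)) ξ := by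
    simpa using ((hasDerivAt_neg ξ).exp).const_sub M
  exact ((hw.comp ξ hsub).log hpos).neg.congr_deriv (by simp [neg_div])

theorem stmt_18_general {Ω : Type*} [MeasurableSpace Ω] (μ : Measure Ω) [IsProbabilityMeasure μ]
    (X : Ω → ℝ)
    (M : ℝ) (hM0 : 0 < M) (hM : eLpNorm X ⊤ μ = ENNReal.ofReal M)
    (w w' h : ℝ → ℝ)
    (hw : w = fun x => (μ {ω | x < X ω}).toReal)
    (hh : h = fun x => ∫ t in Set.Ioi x, w t)
    (hwpos : ∀ x ∈ Set.Ico (0:ℝ) M, 0 < w x)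
    (hw' : ∀ x ∈ Set.Ico (0:ℝ) M, HasDerivAt w (w' x) x)
    (β₀ : ℝ) (hβ1 : β₀ < 1)
    (hbeta : Filter.Tendsto (fun x => (-(w' x)) * h x / (w x) ^ 2)
      (nhdsWithin M (Set.Iio M)) (nhds β₀)) :
    Filter.Tendsto
      (deriv (fun ξ => -Real.log (w (M - Real.exp (-ξ)))))
      Filter.atTop (nhds (β₀ / (1 - β₀))) := by
  subst hh
  have hanti : Antitone w := hw ▸ antitone_measure_lt_toReal X
  have hzero : EqOn w 0 (Ioi M) := fun t ht => by
    have hle : eLpNorm X ⊤ μ ≤ ENNReal.ofReal t := hM.trans_le (ENNReal.ofReal_le_ofReal ht.le)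
    simp [hw, measure_lt_eq_zero_of_eLpNorm_top_le (hM0.le.trans ht.le) hle]
  have hIoo : Ioo 0 M ⊆ Ico 0 M := Ioo_subset_Ico_self
  have hratio := tendsto_neg_deriv_mul_sub_div hanti hzero hM0 (fun x hx => hwpos x (hIoo hx))
    (fun x hx => hw' x (hIoo hx)) hβ1.ne hbeta
  refine (hratio.comp (tendsto_sub_exp_neg_atTop M)).congr' ?_
  filter_upwards [(tendsto_sub_exp_neg_atTop M).eventually (Ioo_mem_nhdsLT hM0)] with ξ hξ
  rw [(hasDerivAt_neg_log_comp_sub_exp_neg (hw' _ (hIoo hξ)) (hwpos _ (hIoo hξ)).ne').deriv,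
    Function.comp_apply, sub_sub_cancel]

/-- Let `X` be a positive random variable with `‖X‖_∞ = M < ∞` whose β function has a
limit `β₀ ∈ [0,1)` at `M`. With `k(ξ) = −log P(X > x)` under `ξ = −log(M − x)`, one has
`lim_{ξ→∞} k'(ξ) = β₀/(1 − β₀)`. -/
theorem stmt_18 {Ω : Type*} [MeasurableSpace Ω] (μ : Measure Ω) [IsProbabilityMeasure μ]
    (X : Ω → ℝ) (hXm : Measurable X) (hXpos : ∀ᵐ ω ∂μ, 0 < X ω)
    (hX : Integrable X μ)
    (M : ℝ) (hM0 : 0 < M) (hM : eLpNorm X ⊤ μ = ENNReal.ofReal M)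
    (w w' h : ℝ → ℝ)
    (hw : w = fun x => (μ {ω | x < X ω}).toReal)
    (hh : h = fun x => ∫ t in Set.Ioi x, w t)
    (hwpos : ∀ x ∈ Set.Ico (0:ℝ) M, 0 < w x)
    (hw' : ∀ x ∈ Set.Ico (0:ℝ) M, HasDerivAt w (w' x) x)
    (hwc : ContinuousOn w' (Set.Ico 0 M))
    (β₀ : ℝ) (hβ0 : 0 ≤ β₀) (hβ1 : β₀ < 1)
    (hbeta : Filter.Tendsto (fun x => (-(w' x)) * h x / (w x) ^ 2)
      (nhdsWithin M (Set.Iio M)) (nhds β₀)) :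
    Filter.Tendsto
      (deriv (fun ξ => -Real.log (w (M - Real.exp (-ξ)))))
      Filter.atTop (nhds (β₀ / (1 - β₀))) :=
  stmt_18_general μ X M hM0 hM w w' h hw hh hwpos hw' β₀ hβ1 hbeta
end
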